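/- arXiv:0901.1196 — 2 statements merged into one kernel-verified Lean document; each statement's English description precedes it below -/
import Mathlib

section
/- With notation as above, if h and h' are homogeneous elements of a graded submodule G ⊆ F, both simple in G with respect to the basis B, and S_B(h) = S_B(h'), then h' = c·h for some nonzero scalar c ∈ k. -/
/-- The `𝒜`-degree of the monomial `x^u`: the image of `u` in `ℤⁿ/L`. -/
def degQ (n : ℕ) (L : AddSubgroup (Fin n → ℤ)) (u : Fin n →₀ ℕ) : (Fin n → ℤ) ⧸ L :=
  QuotientAddGroup.mk (fun i => (u i : ℤ))

/-- The `S`-support of an element `h` of the free module `F = ⊕_{t ∈ ι} R·E_t`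
with respect to the standard basis: the pairs (monomial, basis element) occurring in `h`. -/
def SSupp (k : Type) [Field k] (n : ℕ) (ι : Type)
    (h : ι →₀ MvPolynomial (Fin n) k) : Set ((Fin n →₀ ℕ) × ι) :=
  {p | MvPolynomial.coeff p.1 (h p.2) ≠ 0}

/-- `h` is `𝒜`-homogeneous of degree `b` (the basis element `E_t` having degree `dB t`). -/
def IsHomogEl (k : Type) [Field k] (n : ℕ) (L : AddSubgroup (Fin n → ℤ)) (ι : Type)
    (dB : ι → (Fin n → ℤ) ⧸ L) (h : ι →₀ MvPolynomial (Fin n) k)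
    (b : (Fin n → ℤ) ⧸ L) : Prop :=
  ∀ (a : Fin n →₀ ℕ) (t : ι), MvPolynomial.coeff a (h t) ≠ 0 → degQ n L a + dB t = b

/-- `h` is simple in `G` with respect to the basis: there is no nonzero homogeneous
`h' ∈ G` whose `S`-support is strictly contained in that of `h`. -/
def IsSimpleEl (k : Type) [Field k] (n : ℕ) (L : AddSubgroup (Fin n → ℤ)) (ι : Type)
    (dB : ι → (Fin n → ℤ) ⧸ L)
    (G : Submodule (MvPolynomial (Fin n) k) (ι →₀ MvPolynomial (Fin n) k))
    (h : ι →₀ MvPolynomial (Fin n) k) : Prop :=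
  ¬ ∃ h' ∈ G, h' ≠ 0 ∧ (∃ b, IsHomogEl k n L ι dB h' b) ∧
      SSupp k n ι h' ⊂ SSupp k n ι h

/-
If `h ≠ 0`, fix `(a, t)` in the common support and choose `c` so that `h' - c • h` has no
`(a, t)` term. This difference lies in `G`, its support sits inside the common support
(hence it is homogeneous of the same degree), and it misses `(a, t)`; simplicity of `h`
forces it to vanish.
-/

section Support

variable {k : Type} [Field k] {n : ℕ} {ι : Type}

@[simp]
lemma mem_sSupp {h : ι →₀ MvPolynomial (Fin n) k} {p : (Fin n →₀ ℕ) × ι} :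
    p ∈ SSupp k n ι h ↔ MvPolynomial.coeff p.1 (h p.2) ≠ 0 :=
  Iff.rfl

lemma sSupp_eq_empty_iff {h : ι →₀ MvPolynomial (Fin n) k} :
    SSupp k n ι h = ∅ ↔ h = 0 := by
  simp only [Set.eq_empty_iff_forall_notMem, mem_sSupp, not_not, Prod.forall]
  refine ⟨fun H => ?_, fun H a t => by simp [H]⟩
  ext t a
  exact H a t

lemma sSupp_sub_smul_subset (f g : ι →₀ MvPolynomial (Fin n) k) (c : k) :
    SSupp k n ι (f - c • g) ⊆ SSupp k n ι f ∪ SSupp k n ι g := by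
  intro p hp
  by_contra hfg
  simp only [Set.mem_union, mem_sSupp, not_or, not_not] at hfg
  simp [MvPolynomial.coeff_smul, hfg.1, hfg.2] at hp

lemma IsHomogEl.mono {L : AddSubgroup (Fin n → ℤ)} {dB : ι → (Fin n → ℤ) ⧸ L}
    {g h : ι →₀ MvPolynomial (Fin n) k} {b : (Fin n → ℤ) ⧸ L}
    (hh : IsHomogEl k n L ι dB h b) (hgh : SSupp k n ι g ⊆ SSupp k n ι h) :
    IsHomogEl k n L ι dB g b :=
  fun a t hat => hh a t (@hgh (a, t) hat)

lemma IsSimpleEl.eq_zero_of_sSupp_ssubset {L : AddSubgroup (Fin n → ℤ)}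
    {dB : ι → (Fin n → ℤ) ⧸ L}
    {G : Submodule (MvPolynomial (Fin n) k) (ι →₀ MvPolynomial (Fin n) k)}
    {g h : ι →₀ MvPolynomial (Fin n) k} (hs : IsSimpleEl k n L ι dB G h) (hg : g ∈ G)
    (hhom : ∃ b, IsHomogEl k n L ι dB g b) (hgh : SSupp k n ι g ⊂ SSupp k n ι h) :
    g = 0 := by
  by_contra hg0
  exact hs ⟨g, hg, hg0, hhom, hgh⟩

end Support

theorem simple_same_support_scalar_general (k : Type) [Field k] (n : ℕ)
    (L : AddSubgroup (Fin n → ℤ))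
    (ι : Type) (dB : ι → (Fin n → ℤ) ⧸ L)
    (G : Submodule (MvPolynomial (Fin n) k) (ι →₀ MvPolynomial (Fin n) k))
    (h h' : ι →₀ MvPolynomial (Fin n) k)
    (hmem : h ∈ G) (hmem' : h' ∈ G)
    (hhom : ∃ b, IsHomogEl k n L ι dB h b)
    (hs : IsSimpleEl k n L ι dB G h)
    (hsup : SSupp k n ι h = SSupp k n ι h') :
    ∃ c : k, c ≠ 0 ∧ h' = c • h := by
  rcases eq_or_ne h 0 with rfl | hne
  · refine ⟨1, one_ne_zero, ?_⟩
    rw [one_smul, ← sSupp_eq_empty_iff, ← hsup, sSupp_eq_empty_iff]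
  obtain ⟨⟨a, t⟩, hat⟩ := Set.nonempty_iff_ne_empty.mpr (mt sSupp_eq_empty_iff.mp hne)
  have hat' : (a, t) ∈ SSupp k n ι h' := hsup ▸ hat
  set c := (h' t).coeff a / (h t).coeff a
  refine ⟨c, div_ne_zero hat' hat, sub_eq_zero.mp ?_⟩
  have hsub : SSupp k n ι (h' - c • h) ⊆ SSupp k n ι h := by
    simpa [← hsup] using sSupp_sub_smul_subset h' h c
  have hnotMem : (a, t) ∉ SSupp k n ι (h' - c • h) := by
    simp [MvPolynomial.coeff_smul, c, div_mul_cancel₀ _ (mem_sSupp.mp hat)]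
  obtain ⟨b, hb⟩ := hhom
  exact hs.eq_zero_of_sSupp_ssubset (G.sub_mem hmem' (G.smul_of_tower_mem c hmem))
    ⟨b, hb.mono hsub⟩ ((Set.ssubset_iff_of_subset hsub).mpr ⟨(a, t), hat, hnotMem⟩)

/-- two simple homogeneous elements of a graded submodule `G` with the same
`S`-support are nonzero scalar multiples of each other. -/
theorem simple_same_support_scalar (k : Type) [Field k] (n : ℕ)
    (L : AddSubgroup (Fin n → ℤ)) (hL : ∀ w ∈ L, (∀ i, 0 ≤ w i) → w = 0)
    (ι : Type) [Fintype ι] (dB : ι → (Fin n → ℤ) ⧸ L)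
    (G : Submodule (MvPolynomial (Fin n) k) (ι →₀ MvPolynomial (Fin n) k))
    (h h' : ι →₀ MvPolynomial (Fin n) k)
    (hmem : h ∈ G) (hmem' : h' ∈ G)
    (hhom : ∃ b, IsHomogEl k n L ι dB h b) (hhom' : ∃ b, IsHomogEl k n L ι dB h' b)
    (hs : IsSimpleEl k n L ι dB G h) (hs' : IsSimpleEl k n L ι dB G h')
    (hsup : SSupp k n ι h = SSupp k n ι h') :
    ∃ c : k, c ≠ 0 ∧ h' = c • h :=
  simple_same_support_scalar_general k n L ι dB G h h' hmem hmem' hhom hs hsup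
end

section
/- Let I_L = (f_1, …, f_s) be a lattice ideal generated by an R-regular sequence of binomials whose 𝒜-degrees are pairwise incomparable. Then each f_i is an indispensable binomial of I_L: every minimal 𝒜-homogeneous system of binomial generators of I_L contains a constant multiple of f_i. -/
/-- The partial order on `𝒜`: `b ≤ c` iff `c = b + e` for some `e ∈ 𝒜`. -/
def degLE (n : ℕ) (L : AddSubgroup (Fin n → ℤ)) (b c : (Fin n → ℤ) ⧸ L) : Prop :=
  ∃ w : Fin n →₀ ℕ, b + degQ n L w = c

/-- The strict order on `𝒜`. -/
def degLT (n : ℕ) (L : AddSubgroup (Fin n → ℤ)) (b c : (Fin n → ℤ) ⧸ L) : Prop :=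
  degLE n L b c ∧ b ≠ c

/-- The lattice ideal `I_L ⊆ k[x₁,…,xₙ]`. -/
noncomputable def latticeIdeal (k : Type) [Field k] (n : ℕ) (L : AddSubgroup (Fin n → ℤ)) :
    Ideal (MvPolynomial (Fin n) k) :=
  Ideal.span {f | ∃ u v : Fin n →₀ ℕ, (fun i => (u i : ℤ) - (v i : ℤ)) ∈ L ∧
    f = MvPolynomial.monomial u 1 - MvPolynomial.monomial v 1}

/-- `S` is a minimal system of binomial generators of `I_L`. -/
def IsMinimalBinomialGen (k : Type) [Field k] (n : ℕ) (L : AddSubgroup (Fin n → ℤ))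
    (S : Set (MvPolynomial (Fin n) k)) : Prop :=
  (∀ f ∈ S, ∃ (u v : Fin n →₀ ℕ) (c : k), c ≠ 0 ∧
      f = c • (MvPolynomial.monomial u 1 - MvPolynomial.monomial v 1)) ∧
    Ideal.span S = latticeIdeal k n L ∧
    ∀ f ∈ S, f ∉ Ideal.span (S \ {f})

/-- A binomial `f ∈ I_L` is indispensable if every minimal system of binomial generators
of `I_L` contains a constant multiple of `f`. -/
def IsIndispensable (k : Type) [Field k] (n : ℕ) (L : AddSubgroup (Fin n → ℤ))
    (f : MvPolynomial (Fin n) k) : Prop :=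
  ∀ S : Set (MvPolynomial (Fin n) k), IsMinimalBinomialGen k n L S →
    ∃ c : k, c ≠ 0 ∧ c • f ∈ S

/-!
Grade `k[x₁,…,xₙ]` by `𝒜 = ℤⁿ/L`, giving `x_j` the class of the `j`-th unit vector, so that a
monomial `x^u` has degree `degQ u`. The binomials of `I_L` are homogeneous, and since
`L ∩ ℕⁿ = 0` the only monomial of degree `0` is `1`.

Let `S` be a binomial, hence homogeneous, generating set of `I_L`. Writing `f_i = ∑ a_g g` over `g ∈ S` and
taking degree-`b_i` parts, some `g ∈ S` of degree `≤ b_i` survives. Writing in turn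
`g = ∑ c_j f_j` and taking degree-`deg g` parts, a term with `j ≠ i` would force `b_j ≤ b_i`, so
`g = q f_i` with `q` homogeneous of degree `deg g - b_i ≤ 0`, i.e. a constant.
-/

open MvPolynomial Finsupp

namespace MvPolynomial

variable {σ R M : Type*} [CommSemiring R] [AddCommGroup M] {w : σ → M}

attribute [local instance] weightedGradedAlgebra in
theorem weightedHomogeneousComponent_mul_of_isWeightedHomogeneous {g : MvPolynomial σ R} {e : M}
    (hg : IsWeightedHomogeneous w g e) (a : MvPolynomial σ R) (d : M) :
    weightedHomogeneousComponent w d (a * g) = weightedHomogeneousComponent w (d - e) a * g := by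
  classical
  rw [← weightedDecomposition.decompose'_apply, ← weightedDecomposition.decompose'_apply]
  have := DirectSum.coe_decompose_mul_add_of_right_mem (weightedHomogeneousSubmodule R w)
    (a := a) (i := d - e) hg
  rw [sub_add_cancel] at this
  exact this

theorem exists_weight_eq_of_weightedHomogeneousComponent_ne_zero {a : MvPolynomial σ R} {d : M}
    (h : weightedHomogeneousComponent w d a ≠ 0) : ∃ u : σ →₀ ℕ, weight w u = d := by
  by_contra! hd
  exact h (weightedHomogeneousComponent_eq_zero' d a fun u _ => hd u)

theorem exists_add_weight_eq_of_weightedHomogeneousComponent_mul_ne_zero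
    {g : MvPolynomial σ R} {e : M} (hg : IsWeightedHomogeneous w g e) {a : MvPolynomial σ R}
    {d : M} (h : weightedHomogeneousComponent w d (a * g) ≠ 0) :
    ∃ u : σ →₀ ℕ, e + weight w u = d := by
  rw [weightedHomogeneousComponent_mul_of_isWeightedHomogeneous hg] at h
  obtain ⟨u, hu⟩ :=
    exists_weight_eq_of_weightedHomogeneousComponent_ne_zero (left_ne_zero_of_mul h)
  exact ⟨u, by rw [hu, add_sub_cancel]⟩

theorem eq_smul_of_mem_span_range {ι : Type*} [Fintype ι]
    (hw : ∀ u : σ →₀ ℕ, weight w u = 0 → u = 0)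
    {f : ι → MvPolynomial σ R} {b : ι → M} (hf : ∀ j, IsWeightedHomogeneous w (f j) (b j))
    {i : ι} (hinc : ∀ j ≠ i, ¬ ∃ u : σ →₀ ℕ, b j + weight w u = b i)
    {p : MvPolynomial σ R} {d : M} (hp : IsWeightedHomogeneous w p d)
    (hpf : p ∈ Ideal.span (Set.range f)) (hd : ∃ u : σ →₀ ℕ, d + weight w u = b i) :
    ∃ c : R, p = c • f i := by
  obtain ⟨a, rfl⟩ := Ideal.mem_span_range_iff_exists_fun.mp hpf
  obtain ⟨v, hv⟩ := hd
  have hother : ∀ j ≠ i, weightedHomogeneousComponent w d (a j * f j) = 0 := by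
    intro j hj
    by_contra hne
    obtain ⟨u, hu⟩ := exists_add_weight_eq_of_weightedHomogeneousComponent_mul_ne_zero (hf j) hne
    exact hinc j hj ⟨u + v, by rw [map_add, ← add_assoc, hu, hv]⟩
  set q := weightedHomogeneousComponent w (d - b i) (a i)
  have hsum : ∑ j, a j * f j = q * f i := by
    rw [← weightedHomogeneousComponent_mul_of_isWeightedHomogeneous (hf i),
      ← hp.weightedHomogeneousComponent_same, map_sum]
    exact Fintype.sum_eq_single i hother
  -- `d ≤ b i` leaves room only for the constant monomial in degree `d - b i`
  have hq : q = monomial 0 (coeff 0 q) := by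
    refine (weightedHomogeneousComponent_isWeightedHomogeneous _ _).eq_monomial_of_unique_weight
      fun m hm => (add_eq_zero.mp (hw (m + v) ?_)).1
    rw [map_add, hm, ← hv]
    abel
  exact ⟨coeff 0 q, by rw [smul_eq_C_mul, C_apply, ← hq, hsum]⟩

theorem exists_smul_mem_of_mem_span {ι : Type*} [Fintype ι]
    (hw : ∀ u : σ →₀ ℕ, weight w u = 0 → u = 0)
    {f : ι → MvPolynomial σ R} {b : ι → M} (hf : ∀ j, IsWeightedHomogeneous w (f j) (b j))
    {i : ι} (hinc : ∀ j ≠ i, ¬ ∃ u : σ →₀ ℕ, b j + weight w u = b i) (hfi : f i ≠ 0)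
    {S : Set (MvPolynomial σ R)} (hS : ∀ g ∈ S, ∃ e, IsWeightedHomogeneous w g e)
    (hSf : S ⊆ Ideal.span (Set.range f)) (hfS : f i ∈ Ideal.span S) :
    ∃ c : R, c ≠ 0 ∧ c • f i ∈ S := by
  obtain ⟨a, t, htS, -, hsum⟩ := Submodule.mem_span_iff_exists_finset_subset.mp hfS
  have hcomp : ∑ g ∈ t, weightedHomogeneousComponent w (b i) (a g * g) = f i := by
    rw [← map_sum, ← (hf i).weightedHomogeneousComponent_same, ← hsum]
    rfl
  obtain ⟨g, hgt, hg⟩ := Finset.exists_ne_zero_of_sum_ne_zero (hcomp.symm ▸ hfi)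
  obtain ⟨e, he⟩ := hS g (htS hgt)
  obtain ⟨c, rfl⟩ := eq_smul_of_mem_span_range hw hf hinc he (hSf (htS hgt))
    (exists_add_weight_eq_of_weightedHomogeneousComponent_mul_ne_zero he hg)
  refine ⟨c, ?_, htS hgt⟩
  rintro rfl
  simp at hg

end MvPolynomial

def latticeWeight (n : ℕ) (L : AddSubgroup (Fin n → ℤ)) : Fin n → (Fin n → ℤ) ⧸ L :=
  fun j => QuotientAddGroup.mk (Pi.single j 1)

section LatticeGrading

variable {k : Type} [Field k] {n : ℕ} {L : AddSubgroup (Fin n → ℤ)}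

theorem weight_latticeWeight : ⇑(weight (latticeWeight n L)) = degQ n L := by
  funext u
  have : (fun i => (u i : ℤ)) = ∑ j, u j • Pi.single j (1 : ℤ) := by
    ext i; simp [Finset.sum_apply, Pi.single_apply]
  rw [weight_apply, Finsupp.sum_fintype _ (fun i c => c • latticeWeight n L i)
    fun _ => zero_smul ℕ _, degQ, this, QuotientAddGroup.mk_sum]
  simp [latticeWeight]

theorem degQ_eq_degQ_iff {a b : Fin n →₀ ℕ} :
    degQ n L a = degQ n L b ↔ (fun i => (a i : ℤ) - b i) ∈ L :=
  QuotientAddGroup.eq_iff_sub_mem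

theorem eq_zero_of_weight_latticeWeight_eq_zero (hL : ∀ w ∈ L, (∀ i, 0 ≤ w i) → w = 0)
    (u : Fin n →₀ ℕ) (hu : weight (latticeWeight n L) u = 0) : u = 0 := by
  rw [weight_latticeWeight, degQ, QuotientAddGroup.eq_zero_iff] at hu
  ext i
  simpa using congrFun (hL _ hu fun i => Int.natCast_nonneg (u i)) i

theorem isWeightedHomogeneous_latticeWeight_monomial_sub_monomial {a b : Fin n →₀ ℕ}
    (hab : degQ n L a = degQ n L b) (c : k) :
    IsWeightedHomogeneous (latticeWeight n L) (monomial a c - monomial b c) (degQ n L a) := by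
  rw [← weight_latticeWeight] at hab ⊢
  exact (isWeightedHomogeneous_monomial _ a c rfl).sub
    (isWeightedHomogeneous_monomial _ b c hab.symm)

theorem weightedHomogeneousComponent_mem_latticeIdeal {p : MvPolynomial (Fin n) k}
    (hp : p ∈ latticeIdeal k n L) (d : (Fin n → ℤ) ⧸ L) :
    weightedHomogeneousComponent (latticeWeight n L) d p ∈ latticeIdeal k n L := by
  classical
  let := weightedGradedAlgebra k (latticeWeight n L)
  refine weightedHomogeneousComponent_mem_of_mem _ _ (Ideal.homogeneous_span _ _ ?_) hp d
  rintro _ ⟨a, b, hab, rfl⟩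
  exact ⟨_,
    isWeightedHomogeneous_latticeWeight_monomial_sub_monomial (degQ_eq_degQ_iff.mpr hab) 1⟩

theorem monomial_notMem_latticeIdeal (a : Fin n →₀ ℕ) {c : k} (hc : c ≠ 0) :
    monomial a c ∉ latticeIdeal k n L := by
  have hker : latticeIdeal k n L ≤ RingHom.ker (eval fun _ => (1 : k)) := by
    refine Ideal.span_le.mpr ?_
    rintro _ ⟨u, v, -, rfl⟩
    simp [eval_monomial]
  intro h
  simpa [eval_monomial, hc] using hker h

theorem degQ_eq_of_monomial_sub_monomial_mem_latticeIdeal {a b : Fin n →₀ ℕ} {c : k} (hc : c ≠ 0)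
    (h : monomial a c - monomial b c ∈ latticeIdeal k n L) : degQ n L a = degQ n L b := by
  by_contra hab
  have hcomp := weightedHomogeneousComponent_mem_latticeIdeal h (degQ n L a)
  have ha : IsWeightedHomogeneous (latticeWeight n L) (monomial a c) (degQ n L a) :=
    isWeightedHomogeneous_monomial _ a c (congrFun weight_latticeWeight a)
  have hb : IsWeightedHomogeneous (latticeWeight n L) (monomial b c) (degQ n L b) :=
    isWeightedHomogeneous_monomial _ b c (congrFun weight_latticeWeight b)
  rw [map_sub, ha.weightedHomogeneousComponent_same, hb.weightedHomogeneousComponent_ne _ hab,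
    sub_zero] at hcomp
  exact monomial_notMem_latticeIdeal a hc hcomp

theorem IsMinimalBinomialGen.isWeightedHomogeneous {S : Set (MvPolynomial (Fin n) k)}
    (hS : IsMinimalBinomialGen k n L S) :
    ∀ g ∈ S, ∃ e, IsWeightedHomogeneous (latticeWeight n L) g e := by
  intro g hg
  obtain ⟨a, b, c, hc, rfl⟩ := hS.1 g hg
  rw [smul_sub, smul_monomial, smul_monomial, smul_eq_mul, mul_one] at hg ⊢
  have hab := degQ_eq_of_monomial_sub_monomial_mem_latticeIdeal hc (hS.2.1 ▸ Ideal.subset_span hg)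
  exact ⟨_, isWeightedHomogeneous_latticeWeight_monomial_sub_monomial hab c⟩

end LatticeGrading

theorem regular_sequence_indispensable_general (k : Type) [Field k] (n : ℕ)
    (L : AddSubgroup (Fin n → ℤ)) (hL : ∀ w ∈ L, (∀ i, 0 ≤ w i) → w = 0)
    (s : ℕ) (u v : Fin s → (Fin n →₀ ℕ))
    (f : Fin s → MvPolynomial (Fin n) k)
    (hf : ∀ i, f i = MvPolynomial.monomial (u i) 1 - MvPolynomial.monomial (v i) 1)
    (hbin : ∀ i, (fun j => ((u i) j : ℤ) - ((v i) j : ℤ)) ∈ L)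
    (hne : ∀ i, u i ≠ v i)
    (hgen : Ideal.span (Set.range f) = latticeIdeal k n L)
    (hinc : ∀ i i', i ≠ i' → ¬ degLE n L (degQ n L (u i)) (degQ n L (u i'))) :
    ∀ i, IsIndispensable k n L (f i) := by
  intro i S hS
  have hf_hom : ∀ j, IsWeightedHomogeneous (latticeWeight n L) (f j) (degQ n L (u j)) := fun j =>
    hf j ▸
      isWeightedHomogeneous_latticeWeight_monomial_sub_monomial (degQ_eq_degQ_iff.mpr (hbin j)) 1
  refine exists_smul_mem_of_mem_span (eq_zero_of_weight_latticeWeight_eq_zero hL) hf_hom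
    (fun j hj => ?_) ?_ hS.isWeightedHomogeneous ?_ ?_
  · rw [weight_latticeWeight]
    exact hinc j i hj
  · rw [hf i, sub_ne_zero]
    exact (monomial_left_injective one_ne_zero).ne (hne i)
  · rw [hgen, ← hS.2.1]
    exact Ideal.subset_span
  · rw [hS.2.1, ← hgen]
    exact Ideal.subset_span ⟨i, rfl⟩

/-- if the lattice ideal `I_L` is generated by an `R`-regular sequence of
binomials `f_1, …, f_s` whose `𝒜`-degrees are pairwise incomparable, then each `f_i`
is an indispensable binomial of `I_L`. -/
theorem regular_sequence_indispensable (k : Type) [Field k] (n : ℕ)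
    (L : AddSubgroup (Fin n → ℤ)) (hL : ∀ w ∈ L, (∀ i, 0 ≤ w i) → w = 0)
    (s : ℕ) (u v : Fin s → (Fin n →₀ ℕ))
    (f : Fin s → MvPolynomial (Fin n) k)
    (hf : ∀ i, f i = MvPolynomial.monomial (u i) 1 - MvPolynomial.monomial (v i) 1)
    (hbin : ∀ i, (fun j => ((u i) j : ℤ) - ((v i) j : ℤ)) ∈ L)
    (hne : ∀ i, u i ≠ v i)
    (hreg : RingTheory.Sequence.IsRegular (MvPolynomial (Fin n) k) (List.ofFn f))
    (hgen : Ideal.span (Set.range f) = latticeIdeal k n L)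
    (hinc : ∀ i i', i ≠ i' → ¬ degLE n L (degQ n L (u i)) (degQ n L (u i'))) :
    ∀ i, IsIndispensable k n L (f i) :=
  regular_sequence_indispensable_general k n L hL s u v f hf hbin hne hgen hinc
end
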